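/- Let Π = (P, 𝓛) be a finite projective plane of order n and let m ≥ 1 be a natural number. Then Π is pseudomagic over ℤ/mℤ (i.e., there exists a non-constant line-invariant function v : P → ℤ/mℤ) if and only if gcd(n, m) ≠ 1. -/

import Mathlib

/-!
Summing the line sums of `v` over the `n + 1` lines through a point `a` counts `a` itself
`n + 1` times and every other point once, so line invariance forces `n • v a + ∑ v` to be
independent of `a`; hence `n • (v a - v b) = 0` for all points. Conversely, if `g ≠ 0` is killed
by `n`, then `g` placed on the points of one line and `0` elsewhere has every line sum equal
to `g`. In the finite ring `ℤ/mℤ` a nonzero element killed by `n` exists exactly when `n` is not a unit,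
i.e. when `gcd(n, m) ≠ 1`.
-/

open Configuration

/-- The sum of `v` over the points of the line `l`. -/
noncomputable def lineSum {P L G : Type*} [Membership P L] [AddCommMonoid G]
    (v : P → G) (l : L) : G :=
  ∑ᶠ x ∈ {x : P | x ∈ l}, v x

/-- `v : P → G` is line invariant if its sum along every line of `L` is the same. -/
def LineInvariant (P L : Type*) {G : Type*} [Membership P L] [AddCommMonoid G]
    (v : P → G) : Prop :=
  ∀ l l' : L, lineSum v l = lineSum v l'

open Finset

lemma lineSum_eq_sum_ite {P L G : Type*} [Membership P L] [Fintype P] [AddCommMonoid G]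
    (v : P → G) (l : L) [DecidablePred (· ∈ l)] :
    lineSum v l = ∑ x, if x ∈ l then v x else 0 := by
  rw [lineSum, ← sum_filter, ← finsum_mem_coe_finset]
  congr 1
  ext x
  simp

namespace Configuration.ProjectivePlane

variable {P L : Type*} [Membership P L] [Fintype P] [Fintype L] [ProjectivePlane P L]

section DecidableMem

variable [DecidableRel (· ∈ · : P → L → Prop)]

lemma card_filter_mem (a : P) : #{l : L | a ∈ l} = order P L + 1 := by
  rw [← lineCount_eq L a, lineCount, Nat.card_eq_fintype_card, Fintype.card_subtype]

lemma card_filter_mem_and_mem [DecidableEq P] (a x : P) :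
    #{l : L | a ∈ l ∧ x ∈ l} = if x = a then order P L + 1 else 1 := by
  split_ifs with hxa
  · simpa [hxa] using card_filter_mem (L := L) a
  · exact (Fintype.existsUnique_iff_card_one _).mp
      (HasLines.existsUnique_line P L a x (Ne.symm hxa))

lemma card_filter_mem_and_mem_line [DecidableEq L] (l l₀ : L) :
    #{x : P | x ∈ l ∧ x ∈ l₀} = if l = l₀ then order P L + 1 else 1 := by
  split_ifs with hl
  · rw [← pointCount_eq P l₀, pointCount, Nat.card_eq_fintype_card, Fintype.card_subtype, hl]
    simp
  · exact (Fintype.existsUnique_iff_card_one _).mp (HasPoints.existsUnique_point P L l l₀ hl)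

lemma sum_lineSum_filter_mem {G : Type*} [AddCommMonoid G] (v : P → G) (a : P) :
    ∑ l ∈ univ.filter (fun l : L => a ∈ l), lineSum v l = order P L • v a + ∑ x, v x := by
  classical
  have hcount : ∀ x, ∑ l ∈ univ.filter (fun l : L => a ∈ l), (if x ∈ l then v x else 0)
      = (if x = a then order P L • v a else 0) + v x := by
    intro x
    rw [← sum_filter, filter_filter, sum_const, card_filter_mem_and_mem]
    split_ifs with hxa
    · rw [hxa, succ_nsmul]
    · rw [zero_add, one_smul]
  simp_rw [lineSum_eq_sum_ite]
  rw [sum_comm, sum_congr rfl fun x _ => hcount x, sum_add_distrib, sum_ite_eq']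
  simp

lemma lineSum_ite_mem [DecidableEq L] {G : Type*} [AddCommMonoid G] (g : G) (l₀ l : L) :
    lineSum (fun x : P => if x ∈ l₀ then g else 0) l
      = if l = l₀ then (order P L + 1) • g else g := by
  rw [lineSum_eq_sum_ite]
  simp_rw [← ite_and]
  rw [← sum_filter, sum_const, card_filter_mem_and_mem_line]
  split_ifs <;> simp

lemma lineInvariant_ite_mem {G : Type*} [AddCommMonoid G] {g : G} (hg : order P L • g = 0)
    (l₀ : L) : LineInvariant P L (fun x : P => if x ∈ l₀ then g else 0) := by
  classical
  have hconst : ∀ l : L, lineSum (fun x : P => if x ∈ l₀ then g else 0) l = g := by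
    intro l
    rw [lineSum_ite_mem]
    split_ifs
    · rw [succ_nsmul, hg, zero_add]
    · rfl
  intro l l'
  rw [hconst, hconst]

end DecidableMem

lemma nsmul_sub_eq_zero_of_lineInvariant {G : Type*} [AddCommGroup G] {v : P → G}
    (hv : LineInvariant P L v) (a b : P) : order P L • (v a - v b) = 0 := by
  classical
  obtain ⟨l₀, -⟩ := Nondegenerate.exists_line (L := L) a
  have hsum : ∀ p : P, order P L • v p + ∑ x, v x = (order P L + 1) • lineSum v l₀ := by
    intro p
    rw [← sum_lineSum_filter_mem, sum_congr rfl fun l _ => hv l l₀, sum_const,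
      card_filter_mem]
  rw [nsmul_sub, sub_eq_zero]
  exact add_right_cancel ((hsum a).trans (hsum b).symm)

theorem exists_lineInvariant_ne_const_iff {G : Type*} [AddCommGroup G] :
    (∃ v : P → G, LineInvariant P L v ∧ ¬ ∀ a b : P, v a = v b) ↔
      ∃ g : G, g ≠ 0 ∧ order P L • g = 0 := by
  classical
  constructor
  · rintro ⟨v, hv, hnc⟩
    simp only [not_forall] at hnc
    obtain ⟨a, b, hab⟩ := hnc
    exact ⟨v a - v b, sub_ne_zero.mpr hab, nsmul_sub_eq_zero_of_lineInvariant hv a b⟩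
  · rintro ⟨g, hg, hng⟩
    obtain ⟨_, _, _, l₀, _⟩ := exists_config (P := P) (L := L)
    obtain ⟨q, hq⟩ := Nondegenerate.exists_point (P := P) l₀
    obtain ⟨p, hp⟩ : Nonempty {p : P // p ∈ l₀} := by
      rw [← Fintype.card_pos_iff, ← Nat.card_eq_fintype_card, ← pointCount, pointCount_eq]
      omega
    refine ⟨_, lineInvariant_ite_mem hng l₀, fun hconst => hg ?_⟩
    simpa [hp, hq] using hconst p q

end Configuration.ProjectivePlane

lemma ZMod.exists_ne_zero_nsmul_eq_zero_iff {m : ℕ} [NeZero m] (n : ℕ) :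
    (∃ g : ZMod m, g ≠ 0 ∧ n • g = 0) ↔ n.gcd m ≠ 1 := by
  rw [Ne, ← Nat.coprime_iff_gcd_eq_one, ← ZMod.isUnit_iff_coprime,
    isUnit_iff_mem_nonZeroDivisors_of_finite, notMem_nonZeroDivisors_iff_left]
  simp only [nsmul_eq_mul, Set.nonempty_def, Set.mem_ofPred_eq, and_comm]

theorem stmt_4 {P L : Type*} [Membership P L] [Fintype P] [Fintype L]
    [ProjectivePlane P L] {n : ℕ} (hn : ProjectivePlane.order P L = n)
    (m : ℕ) (hm : 1 ≤ m) :
    (∃ v : P → ZMod m, LineInvariant P L v ∧ ¬ ∀ a b : P, v a = v b) ↔ Nat.gcd n m ≠ 1 := by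
  have : NeZero m := ⟨by omega⟩
  rw [ProjectivePlane.exists_lineInvariant_ne_const_iff, hn,
    ZMod.exists_ne_zero_nsmul_eq_zero_iff]
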